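/- Let φ : ℝ³ → (−∞, ∞] be defined by φ(x) = −(Λ(x₁) + Λ(x₂) + Λ(x₃)) if x lies in the closed simplex {x ∈ ℝ³ : x₁, x₂, x₃ ≥ 0, x₁ + x₂ + x₃ = π} and φ(x) = +∞ otherwise. Then for every y ∈ ℝ³ the Fenchel dual φ*(y) = sup{⟨x, y⟩ − φ(x) : x ∈ ℝ³} equals G(y). Moreover, G : ℝ³ → ℝ is convex and C¹-smooth with ∂G/∂y_i(y) = a_i for i = 1, 2, 3, where (a₁, a₂, a₃) are the inner angles of the generalized Euclidean triangle of edge lengths e^{y₁}, e^{y₂}, e^{y₃} with a_i opposite the edge of length e^{y_i}. -/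

import Mathlib

/-- The Lobachevsky function `Λ(t) = -∫₀ᵗ log |2 sin s| ds`. -/
noncomputable def Lob (t : ℝ) : ℝ := -∫ s in (0 : ℝ)..t, Real.log |2 * Real.sin s|

/-- The inner angle, opposite the edge of length `x i`, of the generalized Euclidean
triangle of edge lengths `x 0, x 1, x 2` (clamped arccos convention). -/
noncomputable def ang (i : Fin 3) (x : Fin 3 → ℝ) : ℝ :=
  Real.arccos (((x (i + 1)) ^ 2 + (x (i + 2)) ^ 2 - (x i) ^ 2) / (2 * x (i + 1) * x (i + 2)))

/- `φ(x) = -(Λ(x₁)+Λ(x₂)+Λ(x₃))` on the closed simplex, `+∞` elsewhere. -/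
open Classical in
noncomputable def phiFn (x : Fin 3 → ℝ) : EReal :=
  if (∀ i, 0 ≤ x i) ∧ x 0 + x 1 + x 2 = Real.pi then
    ((-(Lob (x 0) + Lob (x 1) + Lob (x 2)) : ℝ) : EReal)
  else ⊤

/-- `G(y) = Σᵢ (Λ(aᵢ) + aᵢ yᵢ)`, where `aᵢ` are the inner angles of the generalized
Euclidean triangle of edge lengths `e^{y₁}, e^{y₂}, e^{y₃}`. -/
noncomputable def Gfn (y : Fin 3 → ℝ) : ℝ :=
  ∑ i : Fin 3,
    (Lob (ang i (fun m => Real.exp (y m))) + ang i (fun m => Real.exp (y m)) * y i)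

/-! The heart of the matter is the Fenchel–Young inequality `∑ Λ(xᵢ) + ⟨x, y⟩ ≤ G(y)` on
the simplex. For a nondegenerate triangle with sides `e^{yᵢ}` the law of sines makes
`yᵢ - log (2 sin aᵢ)` independent of `i`, so the angle vector `a` is a critical point on the
simplex of the concave function `x ↦ ∑ Λ(xᵢ) + ⟨x, y⟩` (its Hessian `-diag (cot xᵢ)` is negative
semidefinite on directions of zero sum), hence its maximum, with value `G(y)`. Degenerate
triangles follow by continuity, shrinking the long edge to the boundary. Equality at `x = a(y)`
gives `G(z) ≥ G(y) + ⟨a(y), z - y⟩` for all `y, z`, and a function with a continuous family of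
such supporting hyperplanes is convex and `C¹` with gradient `a`. -/

open Real Set Filter Topology

lemma intervalIntegrable_log_two_mul_sin (a b : ℝ) :
    IntervalIntegrable (fun s => log (2 * sin s)) MeasureTheory.volume a b :=
  ((analyticOnNhd_const (v := (2 : ℝ))).mul
    analyticOnNhd_sin).meromorphicOn.intervalIntegrable_log

lemma Lob_eq_neg_integral (t : ℝ) : Lob t = -∫ s in (0 : ℝ)..t, log (2 * sin s) := by
  simp only [Lob, log_abs]

@[simp]
lemma Lob_zero : Lob 0 = 0 := by simp [Lob]

@[fun_prop]
lemma continuous_Lob : Continuous Lob := by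
  simp only [funext Lob_eq_neg_integral]
  exact (intervalIntegral.continuous_primitive intervalIntegrable_log_two_mul_sin 0).neg

lemma hasDerivAt_Lob {t : ℝ} (ht : sin t ≠ 0) : HasDerivAt Lob (-log (2 * sin t)) t := by
  simp only [funext Lob_eq_neg_integral]
  have hmeas : Measurable fun s => log (2 * sin s) := by fun_prop
  refine (intervalIntegral.integral_hasDerivAt_right (intervalIntegrable_log_two_mul_sin 0 t)
    hmeas.stronglyMeasurable.stronglyMeasurableAtFilter ?_).neg
  exact (continuous_const.mul continuous_sin).continuousAt.log (by simpa using ht)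

lemma apply_one_le_apply_zero_of_deriv2_nonpos {F F' F'' : ℝ → ℝ}
    (hF : ContinuousOn F (Icc 0 1)) (hF' : ∀ t ∈ Ico (0 : ℝ) 1, HasDerivAt F (F' t) t)
    (hF'' : ∀ t ∈ Ico (0 : ℝ) 1, HasDerivAt F' (F'' t) t)
    (hF''_nonpos : ∀ t ∈ Ioo (0 : ℝ) 1, F'' t ≤ 0)
    (hF'_zero : F' 0 ≤ 0) : F 1 ≤ F 0 := by
  have hF'_anti : AntitoneOn F' (Ico 0 1) :=
    antitoneOn_of_hasDerivWithinAt_nonpos (convex_Ico 0 1)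
      (fun t ht => (hF'' t ht).continuousAt.continuousWithinAt)
      (fun t ht => (hF'' t (Ioo_subset_Ico_self (by simpa using ht))).hasDerivWithinAt)
      (by simpa using hF''_nonpos)
  have hF_anti : AntitoneOn F (Icc 0 1) :=
    antitoneOn_of_hasDerivWithinAt_nonpos (convex_Icc 0 1) hF
      (fun t ht => (hF' t (Ioo_subset_Ico_self (by simpa using ht))).hasDerivWithinAt)
      (fun t ht => (hF'_anti (left_mem_Ico.2 one_pos) (Ioo_subset_Ico_self (by simpa using ht))
        (by simp at ht; exact ht.1.le)).trans hF'_zero)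
  exact hF_anti (left_mem_Icc.2 zero_le_one) (right_mem_Icc.2 zero_le_one) zero_le_one

lemma sum_cot_mul_sq_nonneg {b u : Fin 3 → ℝ} (hb : ∀ i, b i ∈ Ioo 0 π) (hb_sum : ∑ i, b i = π)
    (hu_sum : ∑ i, u i = 0) : 0 ≤ ∑ i, cos (b i) / sin (b i) * u i ^ 2 := by
  have hsin : ∀ i, 0 < sin (b i) := fun i => sin_pos_of_pos_of_lt_pi (hb i).1 (hb i).2
  simp only [Fin.sum_univ_three] at hb_sum hu_sum ⊢
  have hb2 : b 2 = π - (b 0 + b 1) := by linarith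
  have hu2 : u 2 = -(u 0 + u 1) := by linarith
  have hsin0 := hsin 0; have hsin1 := hsin 1; have hsin2 := hsin 2
  -- clearing denominators leaves a sum of two squares once `b 2` is eliminated
  have key : 0 ≤ cos (b 0) * sin (b 1) * sin (b 2) * u 0 ^ 2 +
      cos (b 1) * sin (b 0) * sin (b 2) * u 1 ^ 2 +
      cos (b 2) * sin (b 0) * sin (b 1) * u 2 ^ 2 := by
    rw [hb2, hu2, cos_pi_sub, sin_pi_sub, cos_add, sin_add]
    nlinarith [sq_nonneg (cos (b 0) * sin (b 1) * u 0 - cos (b 1) * sin (b 0) * u 1),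
      sq_nonneg (sin (b 0) * sin (b 1) * (u 0 + u 1)), sin_sq_add_cos_sq (b 0),
      sin_sq_add_cos_sq (b 1)]
  have heq : cos (b 0) / sin (b 0) * u 0 ^ 2 + cos (b 1) / sin (b 1) * u 1 ^ 2 +
      cos (b 2) / sin (b 2) * u 2 ^ 2 = (cos (b 0) * sin (b 1) * sin (b 2) * u 0 ^ 2 +
      cos (b 1) * sin (b 0) * sin (b 2) * u 1 ^ 2 + cos (b 2) * sin (b 0) * sin (b 1) * u 2 ^ 2) /
      (sin (b 0) * sin (b 1) * sin (b 2)) := by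
    field_simp
  rw [heq]
  positivity

lemma hasDerivAt_add_mul (a u t : ℝ) : HasDerivAt (fun t => a + t * u) u t := by
  simpa using ((hasDerivAt_id t).mul_const u).const_add a

lemma hasDerivAt_Lob_line {a u y t : ℝ} (h : sin (a + t * u) ≠ 0) :
    HasDerivAt (fun t => Lob (a + t * u) + (a + t * u) * y)
      ((y - log (2 * sin (a + t * u))) * u) t := by
  have hline := hasDerivAt_add_mul a u t
  refine (((hasDerivAt_Lob h).comp t hline).add (hline.mul_const y)).congr_deriv ?_
  ring

lemma hasDerivAt_log_two_sin_line {a u y t : ℝ} (h : sin (a + t * u) ≠ 0) :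
    HasDerivAt (fun t => (y - log (2 * sin (a + t * u))) * u)
      (-(cos (a + t * u) / sin (a + t * u) * u ^ 2)) t := by
  have h2sin := ((hasDerivAt_sin (a + t * u)).comp t (hasDerivAt_add_mul a u t)).const_mul 2
  refine (((h2sin.log (by simpa using h)).const_sub y).mul_const u).congr_deriv ?_
  simp only [Function.comp_apply]
  field_simp

lemma add_mul_sub_mem_Ioo {a x t : ℝ} (ha : a ∈ Ioo 0 π) (hx : x ∈ Icc 0 π)
    (ht : t ∈ Ico 0 1) :
    a + t * (x - a) ∈ Ioo 0 π := by
  obtain ⟨ht0, ht1⟩ := ht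
  constructor <;> nlinarith [ha.1, ha.2, hx.1, hx.2]

/-- The concave function `x ↦ ∑ Λ(xᵢ) + ⟨x, y⟩` on the simplex is maximised at a point `a` of
its relative interior where its gradient `yᵢ - log (2 sin aᵢ)` is constant. -/
lemma sum_Lob_add_le_of_log_two_sin_eq {a x y : Fin 3 → ℝ} {c : ℝ} (ha : ∀ i, a i ∈ Ioo 0 π)
    (ha_sum : ∑ i, a i = π) (hlog : ∀ i, log (2 * sin (a i)) = y i - c) (hx : ∀ i, 0 ≤ x i)
    (hx_sum : ∑ i, x i = π) :
    ∑ i, (Lob (x i) + x i * y i) ≤ ∑ i, (Lob (a i) + a i * y i) := by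
  have hxπ : ∀ i, x i ∈ Icc 0 π := fun i =>
    ⟨hx i, hx_sum ▸ Finset.single_le_sum (fun j _ => hx j) (Finset.mem_univ i)⟩
  have hseg : ∀ t ∈ Ico (0 : ℝ) 1, ∀ i, sin (a i + t * (x i - a i)) ≠ 0 := fun t ht i =>
    have h := add_mul_sub_mem_Ioo (ha i) (hxπ i) ht
    (sin_pos_of_pos_of_lt_pi h.1 h.2).ne'
  have hu_sum : ∑ i, (x i - a i) = 0 := by simp [Finset.sum_sub_distrib, ha_sum, hx_sum]
  have key := apply_one_le_apply_zero_of_deriv2_nonpos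
    (F := fun t => ∑ i, (Lob (a i + t * (x i - a i)) + (a i + t * (x i - a i)) * y i))
    (F' := fun t => ∑ i, (y i - log (2 * sin (a i + t * (x i - a i)))) * (x i - a i))
    (F'' := fun t => ∑ i, -(cos (a i + t * (x i - a i)) / sin (a i + t * (x i - a i)) *
      (x i - a i) ^ 2))
    (by fun_prop)
    (fun t ht => HasDerivAt.fun_sum fun i _ => hasDerivAt_Lob_line (hseg t ht i))
    (fun t ht => HasDerivAt.fun_sum fun i _ => hasDerivAt_log_two_sin_line (hseg t ht i))
    (fun t ht => by
      rw [Finset.sum_neg_distrib, neg_nonpos]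
      refine sum_cot_mul_sq_nonneg (fun i => add_mul_sub_mem_Ioo (ha i) (hxπ i)
        (Ioo_subset_Ico_self ht)) ?_ hu_sum
      simp [Finset.sum_add_distrib, ← Finset.mul_sum, ha_sum, hu_sum])
    (by simp [hlog, ← Finset.mul_sum, hu_sum])
  simpa using key

noncomputable def triangleAngle (p q r : ℝ) : ℝ := arccos ((q ^ 2 + r ^ 2 - p ^ 2) / (2 * q * r))

/-- Heron's product, equal to `16 · area²` for a triangle with sides `p, q, r`. -/
def heron (p q r : ℝ) : ℝ := (p + q + r) * (q + r - p) * (r + p - q) * (p + q - r)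

lemma heron_rotate (p q r : ℝ) : heron q r p = heron p q r := by unfold heron; ring

lemma triangleAngle_eq_pi_of_add_le {p q r : ℝ} (hq : 0 < q) (hr : 0 < r) (h : q + r ≤ p) :
    triangleAngle p q r = π :=
  arccos_eq_pi.2 <| by rw [div_le_iff₀ (by positivity)]; nlinarith

lemma triangleAngle_rotate_eq_zero_of_add_le {p q r : ℝ} (hq : 0 < q) (hr : 0 < r)
    (h : q + r ≤ p) : triangleAngle q r p = 0 ∧ triangleAngle r p q = 0 :=
  ⟨arccos_eq_zero.2 <| by rw [le_div_iff₀ (by nlinarith)]; nlinarith,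
    arccos_eq_zero.2 <| by rw [le_div_iff₀ (by nlinarith)]; nlinarith⟩

section NondegenerateTriangle

variable {p q r : ℝ} (hp : 0 < p) (hq : 0 < q) (hr : 0 < r)
  (h₁ : p < q + r) (h₂ : q < r + p) (h₃ : r < p + q)
include hp hq hr h₁ h₂ h₃

lemma heron_pos : 0 < heron p q r := by
  unfold heron
  have := add_pos (add_pos hp hq) hr
  apply mul_pos (mul_pos (mul_pos this _) _) <;> linarith

lemma abs_triangle_cos_lt_one : |(q ^ 2 + r ^ 2 - p ^ 2) / (2 * q * r)| < 1 := by
  rw [abs_lt, lt_div_iff₀ (by positivity), div_lt_one (by positivity)]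
  constructor <;> nlinarith

lemma cos_triangleAngle : cos (triangleAngle p q r) = (q ^ 2 + r ^ 2 - p ^ 2) / (2 * q * r) :=
  have h := abs_lt.1 (abs_triangle_cos_lt_one hp hq hr h₁ h₂ h₃)
  cos_arccos h.1.le h.2.le

lemma sin_triangleAngle : sin (triangleAngle p q r) = √(heron p q r) / (2 * q * r) := by
  rw [triangleAngle, sin_arccos]
  have : 1 - ((q ^ 2 + r ^ 2 - p ^ 2) / (2 * q * r)) ^ 2 = heron p q r / (2 * q * r) ^ 2 := by
    unfold heron; field_simp; ring
  rw [this, sqrt_div (heron_pos hp hq hr h₁ h₂ h₃).le, sqrt_sq (by positivity)]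

lemma two_mul_sin_triangleAngle :
    2 * sin (triangleAngle p q r) = p * (√(heron p q r) / (p * q * r)) := by
  rw [sin_triangleAngle hp hq hr h₁ h₂ h₃]
  field_simp

lemma triangleAngle_mem_Ioo : triangleAngle p q r ∈ Ioo 0 π :=
  have h := abs_lt.1 (abs_triangle_cos_lt_one hp hq hr h₁ h₂ h₃)
  ⟨arccos_pos.2 h.2, arccos_lt_pi.2 h.1⟩

lemma triangleAngle_add_add :
    triangleAngle p q r + triangleAngle q r p + triangleAngle r p q = π := by
  have hH := heron_pos hp hq hr h₁ h₂ h₃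
  have hA := triangleAngle_mem_Ioo hp hq hr h₁ h₂ h₃
  have hB := triangleAngle_mem_Ioo hq hr hp h₂ h₃ h₁
  have hsA := sin_triangleAngle hp hq hr h₁ h₂ h₃
  have hsB := sin_triangleAngle hq hr hp h₂ h₃ h₁
  have hcA := cos_triangleAngle hp hq hr h₁ h₂ h₃
  have hcB := cos_triangleAngle hq hr hp h₂ h₃ h₁
  rw [heron_rotate] at hsB
  set A := triangleAngle p q r
  set B := triangleAngle q r p
  -- `A + B < π` since `sin (A + B) > 0`, and `cos (π - (A + B))` is the cosine of the third angle
  have hsin : sin (A + B) = √(heron p q r) / (2 * p * q) := by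
    rw [sin_add, hsA, hsB, hcA, hcB]
    field_simp
    ring
  have hlt : A + B < π := by
    by_contra! hge
    have := sin_nonneg_of_nonneg_of_le_pi (x := A + B - π) (by linarith)
      (by linarith [hA.2, hB.2])
    rw [sin_sub_pi, hsin] at this
    have : 0 < √(heron p q r) / (2 * p * q) := by positivity
    linarith
  have hcos : cos (π - (A + B)) = (p ^ 2 + q ^ 2 - r ^ 2) / (2 * p * q) := by
    rw [cos_pi_sub, cos_add, hsA, hsB, hcA, hcB]
    field_simp
    rw [sq_sqrt hH.le]
    unfold heron
    ring
  have : triangleAngle r p q = π - (A + B) := by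
    rw [triangleAngle, ← hcos, arccos_cos (by linarith) (by linarith [hA.1, hB.1])]
  linarith

end NondegenerateTriangle

lemma ang_mem_Icc (i : Fin 3) (x : Fin 3 → ℝ) : ang i x ∈ Icc 0 π :=
  ⟨arccos_nonneg _, arccos_le_pi _⟩

lemma ang_comp_add_right (i k : Fin 3) (x : Fin 3 → ℝ) :
    ang i (x ∘ (· + k)) = ang (i + k) x := by
  simp only [ang, Function.comp_apply, add_right_comm i _ k]

lemma ang_of_add_le {x : Fin 3 → ℝ} (hx : ∀ i, 0 < x i) (h : x 1 + x 2 ≤ x 0) :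
    ang 0 x = π ∧ ang 1 x = 0 ∧ ang 2 x = 0 :=
  ⟨triangleAngle_eq_pi_of_add_le (hx 1) (hx 2) h,
    triangleAngle_rotate_eq_zero_of_add_le (hx 1) (hx 2) h⟩

section Nondegenerate

variable {x : Fin 3 → ℝ} (hx : ∀ i, 0 < x i) (hnd : ∀ i, x i < x (i + 1) + x (i + 2))
include hx hnd

lemma ang_mem_Ioo (i : Fin 3) : ang i x ∈ Ioo 0 π := by
  have h₁ := hnd 0; have h₂ := hnd 1; have h₃ := hnd 2
  fin_cases i
  · exact triangleAngle_mem_Ioo (hx 0) (hx 1) (hx 2) h₁ h₂ h₃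
  · exact triangleAngle_mem_Ioo (hx 1) (hx 2) (hx 0) h₂ h₃ h₁
  · exact triangleAngle_mem_Ioo (hx 2) (hx 0) (hx 1) h₃ h₁ h₂

lemma two_mul_sin_ang (i : Fin 3) :
    2 * sin (ang i x) = x i * (√(heron (x 0) (x 1) (x 2)) / (x 0 * x 1 * x 2)) := by
  have h₁ := hnd 0; have h₂ := hnd 1; have h₃ := hnd 2
  fin_cases i
  · exact two_mul_sin_triangleAngle (hx 0) (hx 1) (hx 2) h₁ h₂ h₃
  · have := two_mul_sin_triangleAngle (hx 1) (hx 2) (hx 0) h₂ h₃ h₁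
    rwa [heron_rotate, ← mul_rotate (x 0)] at this
  · have := two_mul_sin_triangleAngle (hx 2) (hx 0) (hx 1) h₃ h₁ h₂
    rwa [heron_rotate, heron_rotate, mul_rotate (x 2)] at this

end Nondegenerate

lemma sum_ang_comp_add_right (k : Fin 3) (x : Fin 3 → ℝ) :
    ∑ i, ang i (x ∘ (· + k)) = ∑ i, ang i x := by
  simp only [ang_comp_add_right]
  exact Equiv.sum_comp (Equiv.addRight k) (fun i => ang i x)

lemma sum_ang {x : Fin 3 → ℝ} (hx : ∀ i, 0 < x i) : ∑ i, ang i x = π := by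
  by_cases hnd : ∀ i, x i < x (i + 1) + x (i + 2)
  · rw [Fin.sum_univ_three]
    exact triangleAngle_add_add (hx 0) (hx 1) (hx 2) (hnd 0) (hnd 1) (hnd 2)
  push Not at hnd
  obtain ⟨k, hk⟩ := hnd
  rw [← sum_ang_comp_add_right k, Fin.sum_univ_three]
  obtain ⟨h₀, h₁, h₂⟩ := ang_of_add_le (x := x ∘ (· + k)) (fun i => hx _)
    (by simpa [add_comm] using hk)
  rw [h₀, h₁, h₂]
  ring

noncomputable def expAngles (y : Fin 3 → ℝ) (i : Fin 3) : ℝ := ang i fun m => exp (y m)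

lemma Gfn_eq_sum_expAngles (y : Fin 3 → ℝ) :
    Gfn y = ∑ i, (Lob (expAngles y i) + expAngles y i * y i) := rfl

lemma sum_expAngles (y : Fin 3 → ℝ) : ∑ i, expAngles y i = π :=
  sum_ang fun _ => exp_pos _

lemma Gfn_comp_add_right (k : Fin 3) (y : Fin 3 → ℝ) : Gfn (y ∘ (· + k)) = Gfn y := by
  have h := ang_comp_add_right (x := fun m => exp (y m)) (k := k)
  simp only [Function.comp_def] at h
  simp only [Gfn, Function.comp_apply, h]
  exact Equiv.sum_comp (Equiv.addRight k)
    (fun i => Lob (ang i fun m => exp (y m)) + ang i (fun m => exp (y m)) * y i)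

@[fun_prop]
lemma continuous_expAngles (i : Fin 3) : Continuous fun y => expAngles y i :=
  continuous_arccos.comp <| Continuous.div (by fun_prop) (by fun_prop) fun _ => by positivity

lemma continuous_Gfn : Continuous Gfn := by
  simp only [funext Gfn_eq_sum_expAngles]
  fun_prop

lemma sum_Lob_add_le_Gfn_of_nondegenerate {x y : Fin 3 → ℝ}
    (hnd : ∀ i, exp (y i) < exp (y (i + 1)) + exp (y (i + 2))) (hx : ∀ i, 0 ≤ x i)
    (hx_sum : ∑ i, x i = π) : ∑ i, (Lob (x i) + x i * y i) ≤ Gfn y := by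
  have hpos : ∀ i, 0 < exp (y i) := fun _ => exp_pos _
  set K := √(heron (exp (y 0)) (exp (y 1)) (exp (y 2))) /
    (exp (y 0) * exp (y 1) * exp (y 2))
  have hK : 0 < K := by
    have := heron_pos (hpos 0) (hpos 1) (hpos 2) (hnd 0) (hnd 1) (hnd 2)
    positivity
  refine sum_Lob_add_le_of_log_two_sin_eq (c := -log K) (ang_mem_Ioo hpos hnd)
    (sum_expAngles y) (fun i => ?_) hx hx_sum
  rw [two_mul_sin_ang hpos hnd, log_mul (exp_pos _).ne' hK.ne', log_exp,
    sub_neg_eq_add]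

lemma Gfn_of_add_le {y : Fin 3 → ℝ} (h : exp (y 1) + exp (y 2) ≤ exp (y 0)) :
    Gfn y = Lob π + π * y 0 := by
  obtain ⟨h₀, h₁, h₂⟩ := ang_of_add_le (fun _ => exp_pos _) h
  simp only [Gfn, Fin.sum_univ_three, h₀, h₁, h₂, Lob_zero]
  ring

/-- Lower `y 0` to the boundary value `s₀` of the nondegenerate region, where the inequality
holds by continuity; above `s₀` the right side grows with slope `π ≥ x 0`. -/
lemma sum_Lob_add_le_Gfn_of_add_le {x y : Fin 3 → ℝ} (h : exp (y 1) + exp (y 2) ≤ exp (y 0))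
    (hx : ∀ i, 0 ≤ x i) (hx_sum : ∑ i, x i = π) : ∑ i, (Lob (x i) + x i * y i) ≤ Gfn y := by
  have hq := exp_pos (y 1)
  have hr := exp_pos (y 2)
  set s₀ := log (exp (y 1) + exp (y 2))
  have hs₀ : exp s₀ = exp (y 1) + exp (y 2) := exp_log (by positivity)
  have hs₀y : s₀ ≤ y 0 := by rw [← exp_le_exp, hs₀]; exact h
  have hL : ∀ s, ∑ i, (Lob (x i) + x i * Function.update y 0 s i) =
      Lob (x 0) + Lob (x 1) + Lob (x 2) + (x 0 * s + x 1 * y 1 + x 2 * y 2) := by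
    intro s; simp [Fin.sum_univ_three]; ring
  have hnd : ∀ s ∈ Ioo (log (max (exp (y 1)) (exp (y 2)))) s₀,
      ∑ i, (Lob (x i) + x i * Function.update y 0 s i) ≤ Gfn (Function.update y 0 s) := by
    intro s ⟨hs₁, hs₂⟩
    rw [← exp_lt_exp, exp_log (by positivity), max_lt_iff] at hs₁
    rw [← exp_lt_exp, hs₀] at hs₂
    refine sum_Lob_add_le_Gfn_of_nondegenerate (fun i => ?_) hx hx_sum
    fin_cases i <;> simp <;> linarith
  have hbdry : ∑ i, (Lob (x i) + x i * Function.update y 0 s₀ i) ≤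
      Gfn (Function.update y 0 s₀) := by
    refine le_of_tendsto_of_tendsto (b := 𝓝[<] s₀) ?_
      (((continuous_Gfn.comp (continuous_const.update 0 continuous_id)).tendsto s₀).mono_left
        nhdsWithin_le_nhds)
      (eventually_of_mem (Ioo_mem_nhdsLT ?_) hnd)
    · simp only [hL]
      exact ((by fun_prop : Continuous fun s => Lob (x 0) + Lob (x 1) + Lob (x 2) +
        (x 0 * s + x 1 * y 1 + x 2 * y 2)).tendsto s₀).mono_left nhdsWithin_le_nhds
    · exact log_lt_log (by positivity) (max_lt (by linarith) (by linarith))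
  rw [hL, Gfn_of_add_le (by simp [hs₀]), Function.update_self] at hbdry
  have hx₀ : x 0 ≤ π :=
    hx_sum ▸ Finset.single_le_sum (fun j _ => hx j) (Finset.mem_univ 0)
  rw [Gfn_of_add_le h, Fin.sum_univ_three]
  nlinarith [mul_nonneg (sub_nonneg.2 hx₀) (sub_nonneg.2 hs₀y)]

lemma sum_Lob_add_le_Gfn {x y : Fin 3 → ℝ} (hx : ∀ i, 0 ≤ x i) (hx_sum : ∑ i, x i = π) :
    ∑ i, (Lob (x i) + x i * y i) ≤ Gfn y := by
  by_cases hnd : ∀ i, exp (y i) < exp (y (i + 1)) + exp (y (i + 2))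
  · exact sum_Lob_add_le_Gfn_of_nondegenerate hnd hx hx_sum
  push Not at hnd
  obtain ⟨k, hk⟩ := hnd
  rw [← Gfn_comp_add_right k]
  have := sum_Lob_add_le_Gfn_of_add_le (x := x ∘ (· + k)) (y := y ∘ (· + k))
    (by simpa [add_comm] using hk) (fun _ => hx _)
    (by rw [← hx_sum]; exact Equiv.sum_comp (Equiv.addRight k) x)
  rwa [← Equiv.sum_comp (Equiv.addRight k) (fun i => Lob (x i) + x i * y i)]

section Subgradient

variable {E : Type*} [NormedAddCommGroup E] [NormedSpace ℝ E] {f : E → ℝ} {g : E → E →L[ℝ] ℝ}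

lemma convexOn_univ_of_le_add_apply_sub (hg : ∀ y z, f y + g y (z - y) ≤ f z) :
    ConvexOn ℝ univ f := by
  refine ⟨convex_univ, fun p _ q _ a b ha hb hab => ?_⟩
  set w := a • p + b • q
  have hzero : a • (p - w) + b • (q - w) = 0 := by
    rw [smul_sub, smul_sub, sub_add_sub_comm, ← add_smul, hab, one_smul, sub_self]
  have := congrArg (g w) hzero
  rw [map_add, map_smul, map_smul, map_zero, smul_eq_mul, smul_eq_mul] at this
  have hp := mul_le_mul_of_nonneg_left (hg w p) ha
  have hq := mul_le_mul_of_nonneg_left (hg w q) hb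
  have hw : f w = a * f w + b * f w := by rw [← add_mul, hab, one_mul]
  simp only [smul_eq_mul]
  linarith

/-- Two-sided subgradient bounds `g y (z - y) ≤ f z - f y ≤ g z (z - y)` squeeze the remainder. -/
lemma hasFDerivAt_of_le_add_apply_sub (hg : ∀ y z, f y + g y (z - y) ≤ f z) {y : E}
    (hgy : ContinuousAt g y) : HasFDerivAt f (g y) y := by
  rw [hasFDerivAt_iff_isLittleO_nhds_zero, Asymptotics.isLittleO_iff]
  intro ε hε
  have hgy' : Tendsto (fun h => g (y + h)) (𝓝 0) (𝓝 (g y)) :=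
    hgy.tendsto.comp (by simpa using (continuous_const_add y).tendsto 0)
  filter_upwards [hgy'.eventually (Metric.closedBall_mem_nhds _ hε)] with h hh
  have hlow := hg y (y + h)
  have hupp := hg (y + h) y
  simp only [add_sub_cancel_left, sub_add_cancel_left, map_neg] at hlow hupp
  have hdist : ‖(g (y + h) - g y) h‖ ≤ ε * ‖h‖ :=
    (ContinuousLinearMap.le_opNorm _ h).trans (mul_le_mul_of_nonneg_right
      (by simpa [dist_eq_norm] using hh) (norm_nonneg h))
  rw [sub_apply, Real.norm_eq_abs] at hdist
  rw [Real.norm_eq_abs, abs_le]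
  constructor <;> linarith [(abs_le.1 hdist).1, (abs_le.1 hdist).2]

lemma contDiff_one_of_le_add_apply_sub (hg : ∀ y z, f y + g y (z - y) ≤ f z)
    (hgc : Continuous g) : ContDiff ℝ 1 f :=
  contDiff_one_iff_hasFDerivAt.2
    ⟨g, hgc, fun _ => hasFDerivAt_of_le_add_apply_sub hg hgc.continuousAt⟩

end Subgradient

noncomputable def gradGfn (y : Fin 3 → ℝ) : (Fin 3 → ℝ) →L[ℝ] ℝ :=
  ∑ i, expAngles y i • ContinuousLinearMap.proj i

lemma gradGfn_apply (y v : Fin 3 → ℝ) : gradGfn y v = ∑ i, expAngles y i * v i := by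
  simp [gradGfn]

lemma continuous_gradGfn : Continuous gradGfn :=
  continuous_finsetSum _ fun i _ => (continuous_expAngles i).smul continuous_const

lemma Gfn_add_gradGfn_le (y z : Fin 3 → ℝ) : Gfn y + gradGfn y (z - y) ≤ Gfn z := by
  have h := sum_Lob_add_le_Gfn (y := z) (fun i => (ang_mem_Icc i _).1) (sum_expAngles y)
  rw [Gfn_eq_sum_expAngles, gradGfn_apply]
  simp only [expAngles, Pi.sub_apply, ← Finset.sum_add_distrib] at h ⊢
  convert h using 2
  ring

lemma iSup_sum_mul_sub_phiFn (y : Fin 3 → ℝ) :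
    (⨆ x : Fin 3 → ℝ, (((∑ i : Fin 3, x i * y i : ℝ) : EReal) - phiFn x)) =
      (Gfn y : EReal) := by
  refine le_antisymm (iSup_le fun x => ?_) (le_iSup_of_le (expAngles y) ?_)
  · unfold phiFn
    split_ifs with hx
    · rw [← EReal.coe_sub, EReal.coe_le_coe_iff]
      have := sum_Lob_add_le_Gfn (y := y) hx.1 (by rw [Fin.sum_univ_three]; exact hx.2)
      simp only [Fin.sum_univ_three] at this ⊢
      linarith
    · simp
  · have hmem :
        (∀ i, 0 ≤ expAngles y i) ∧ expAngles y 0 + expAngles y 1 + expAngles y 2 = π :=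
      ⟨fun i => (ang_mem_Icc i _).1, by rw [← Fin.sum_univ_three]; exact sum_expAngles y⟩
    rw [phiFn, if_pos hmem, ← EReal.coe_sub, EReal.coe_le_coe_iff, Gfn_eq_sum_expAngles]
    simp only [Fin.sum_univ_three]
    linarith

theorem stmt5 :
    (∀ y : Fin 3 → ℝ,
      (⨆ x : Fin 3 → ℝ, (((∑ i : Fin 3, x i * y i : ℝ) : EReal) - phiFn x)) =
        ((Gfn y : ℝ) : EReal)) ∧
    ConvexOn ℝ Set.univ Gfn ∧ ContDiff ℝ 1 Gfn ∧
    ∀ y : Fin 3 → ℝ, ∀ i : Fin 3,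
      fderiv ℝ Gfn y (Pi.single i 1) = ang i (fun m => Real.exp (y m)) := by
  refine ⟨iSup_sum_mul_sub_phiFn, convexOn_univ_of_le_add_apply_sub Gfn_add_gradGfn_le,
    contDiff_one_of_le_add_apply_sub Gfn_add_gradGfn_le continuous_gradGfn, fun y i => ?_⟩
  rw [(hasFDerivAt_of_le_add_apply_sub Gfn_add_gradGfn_le
    continuous_gradGfn.continuousAt).fderiv, gradGfn_apply]
  simp [Pi.single_apply, expAngles]
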